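/- In a trunk, any two maximal chains are order-isomorphic: if P is a partial order in which incomparability is transitive, and C and C' are chains of P that are maximal under inclusion, then there exists an order isomorphism between C and C' (with their induced orders). -/
import Mathlib


variable {P : Type*} [PartialOrder P]

/-- Two elements of a partial order are incomparable if neither is `≤` the other. -/
def Incomp (x y : P) : Prop := x ≠ y ∧ ¬x ≤ y ∧ ¬y ≤ x

/-- "Equal or incomparable". -/
def TrunkRel (x y : P) : Prop := x = y ∨ Incomp x y

lemma trunkRel_refl (x : P) : TrunkRel x x := Or.inl rfl

lemma trunkRel_symm {x y : P} (h : TrunkRel x y) : TrunkRel y x := by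
  rcases h with h | ⟨h1, h2, h3⟩
  · exact Or.inl h.symm
  · exact Or.inr ⟨Ne.symm h1, h3, h2⟩

lemma trunkRel_trans
    (htrunk : ∀ x y z : P, x ≠ z → Incomp x y → Incomp y z → Incomp x z)
    {x y z : P} (h1 : TrunkRel x y) (h2 : TrunkRel y z) : TrunkRel x z := by
  rcases h1 with rfl | h1
  · exact h2
  rcases h2 with rfl | h2
  · exact Or.inr h1
  by_cases hxz : x = z
  · exact Or.inl hxz
  · exact Or.inr (htrunk x y z hxz h1 h2)

lemma exists_trunkRel (C : Set P) (hC : IsMaxChain (· ≤ ·) C) (x : P) :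
    ∃ c ∈ C, TrunkRel x c := by
  by_cases h : ∀ c ∈ C, x ≠ c → x ≤ c ∨ c ≤ x
  · have hchain : IsChain (· ≤ ·) (insert x C) := hC.1.insert (fun b hb hxb => h b hb hxb)
    have := hC.2 hchain (Set.subset_insert x C)
    have hx : x ∈ C := this ▸ Set.mem_insert x C
    exact ⟨x, hx, trunkRel_refl x⟩
  · push_neg at h
    obtain ⟨c, hc, hne, h1, h2⟩ := h
    exact ⟨c, hc, Or.inr ⟨hne, h1, h2⟩⟩

lemma trunkRel_unique
    (htrunk : ∀ x y z : P, x ≠ z → Incomp x y → Incomp y z → Incomp x z)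
    {C : Set P} (hC : IsChain (· ≤ ·) C) {x c1 c2 : P}
    (h1 : c1 ∈ C) (h2 : c2 ∈ C) (r1 : TrunkRel x c1) (r2 : TrunkRel x c2) :
    c1 = c2 := by
  by_contra hne
  have h := trunkRel_trans htrunk (trunkRel_symm r1) r2
  rcases h with h | h
  · exact hne h
  · rcases hC h1 h2 hne with hle | hle
    · exact h.2.1 hle
    · exact h.2.2 hle

lemma trunkRel_mono
    (htrunk : ∀ x y z : P, x ≠ z → Incomp x y → Incomp y z → Incomp x z)
    {C' : Set P} (hC' : IsChain (· ≤ ·) C') {c1 c2 d1 d2 : P}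
    (hd1 : d1 ∈ C') (hd2 : d2 ∈ C') (h12 : c1 ≤ c2)
    (r1 : TrunkRel c1 d1) (r2 : TrunkRel c2 d2) : d1 ≤ d2 := by
  by_cases hdd : d1 = d2
  · exact hdd ▸ le_refl d1
  rcases hC' hd1 hd2 hdd with h | h
  · exact h
  exfalso
  -- h : d2 ≤ d1
  rcases r1 with rfl | i1
  · rcases r2 with rfl | i2
    · exact hdd (le_antisymm h12 h)
    · exact i2.2.2 (h.trans h12)
  · rcases r2 with rfl | i2
    · exact i1.2.1 (h12.trans h)
    · -- i1 : Incomp c1 d1, i2 : Incomp c2 d2, h : d2 ≤ d1, h12 : c1 ≤ c2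
      by_cases hc : c1 = c2
      · subst hc
        have : Incomp d1 d2 :=
          htrunk d1 c1 d2 hdd ⟨Ne.symm i1.1, i1.2.2, i1.2.1⟩ i2
        exact this.2.2 h
      · have hc1d2 : c1 ≠ d2 := by
          rintro rfl
          exact i1.2.1 h
        have hi : Incomp c1 d2 := by
          refine ⟨hc1d2, fun hle => i1.2.1 (hle.trans h), fun hle => i2.2.2 (hle.trans h12)⟩
        have : Incomp c1 c2 :=
          htrunk c1 d2 c2 hc hi ⟨Ne.symm i2.1, i2.2.2, i2.2.1⟩
        exact this.2.1 h12

/-- In a trunk (a partial order whose incomparability relation is transitive),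
any two maximal chains are order-isomorphic. -/
theorem maximal_chains_isomorphic_in_trunk
    (htrunk : ∀ x y z : P, x ≠ z → Incomp x y → Incomp y z → Incomp x z)
    (C C' : Set P) (hC : IsMaxChain (· ≤ ·) C) (hC' : IsMaxChain (· ≤ ·) C') :
    Nonempty (C ≃o C') := by
  classical
  choose f hfmem hfrel using fun x : C => exists_trunkRel C' hC' (x : P)
  choose g hgmem hgrel using fun y : C' => exists_trunkRel C hC (y : P)
  refine ⟨{ toFun := fun x => ⟨f x, hfmem x⟩
            invFun := fun y => ⟨g y, hgmem y⟩
            left_inv := ?_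
            right_inv := ?_
            map_rel_iff' := ?_ }⟩
  · intro x
    ext
    exact trunkRel_unique htrunk hC.1 (hgmem ⟨f x, hfmem x⟩) x.2
      (trunkRel_trans htrunk (hfrel x) (hgrel ⟨f x, hfmem x⟩)) (trunkRel_refl _)
  · intro y
    ext
    exact trunkRel_unique htrunk hC'.1 (hfmem ⟨g y, hgmem y⟩) y.2
      (trunkRel_trans htrunk (hgrel y) (hfrel ⟨g y, hgmem y⟩)) (trunkRel_refl _)
  · intro a b
    constructor
    · intro hle
      have : (a : P) ≤ (b : P) := by
        have := trunkRel_mono htrunk hC.1 (hgmem ⟨f a, hfmem a⟩) (hgmem ⟨f b, hfmem b⟩)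
          hle (hgrel ⟨f a, hfmem a⟩) (hgrel ⟨f b, hfmem b⟩)
        have ha : g ⟨f a, hfmem a⟩ = (a : P) :=
          trunkRel_unique htrunk hC.1 (hgmem ⟨f a, hfmem a⟩) a.2
            (trunkRel_trans htrunk (hfrel a) (hgrel ⟨f a, hfmem a⟩)) (trunkRel_refl _)
        have hb : g ⟨f b, hfmem b⟩ = (b : P) :=
          trunkRel_unique htrunk hC.1 (hgmem ⟨f b, hfmem b⟩) b.2
            (trunkRel_trans htrunk (hfrel b) (hgrel ⟨f b, hfmem b⟩)) (trunkRel_refl _)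
        rwa [ha, hb] at this
      exact this
    · intro hle
      exact trunkRel_mono htrunk hC'.1 (hfmem a) (hfmem b) hle (hfrel a) (hfrel b)
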